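/- arXiv:1903.05771 — 3 statements merged into one kernel-verified Lean document; each statement's English description precedes it below -/
import Mathlib

section
/- Let f : V → ℝ be positively 1-homogeneous on a finite-dimensional real normed space V and convex along all line directions belonging to a cone D that spans V. Then for each x₀ ∈ D there exists a linear functional ℓ : V → ℝ with ℓ(x₀) = f(x₀) and f ≥ ℓ on V (i.e., f is convex at x₀). -/
open Filter Function Set

private lemma kk_lin_convexOn (c : ℝ) : ConvexOn ℝ Set.univ (fun t : ℝ => t * c) := by
  refine ⟨convex_univ, fun x _ y _ a b ha hb hab => le_of_eq ?_⟩
  simp only [smul_eq_mul]; ring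

/-- three-point convexity inequality -/
private lemma kk_tp {φ : ℝ → ℝ} (hφ : ConvexOn ℝ Set.univ φ) {x y z : ℝ}
    (hxz : x < z) (hxy : x ≤ y) (hyz : y ≤ z) :
    0 ≤ (z - y) * φ x + (y - x) * φ z - (z - x) * φ y := by
  have hzx : (0:ℝ) < z - x := by linarith
  have ha : 0 ≤ (z - y)/(z - x) := div_nonneg (by linarith) hzx.le
  have hb : 0 ≤ (y - x)/(z - x) := div_nonneg (by linarith) hzx.le
  have hab : (z - y)/(z - x) + (y - x)/(z - x) = 1 := by field_simp; ring
  have h := hφ.2 (mem_univ x) (mem_univ z) ha hb hab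
  simp only [smul_eq_mul] at h
  have e : (z - y)/(z - x) * x + (y - x)/(z - x) * z = y := by field_simp; ring
  rw [e] at h
  have h2 := mul_le_mul_of_nonneg_left h hzx.le
  have e2 : (z - x) * ((z - y)/(z - x) * φ x + (y - x)/(z - x) * φ z)
      = (z - y) * φ x + (y - x) * φ z := by field_simp
  rw [e2] at h2
  linarith

/-- One-dimensional slope estimate for convex functions. -/
private lemma kk_slope {φ : ℝ → ℝ} (hφ : ConvexOn ℝ Set.univ φ) {M m τ : ℝ}
    (hm : m ≤ φ 0) (hM1 : φ 2 ≤ M) (hM2 : φ (-2) ≤ M) (hτ : |τ| ≤ 1) :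
    |φ τ - φ 0| ≤ (M - m) * |τ| := by
  rcases abs_le.1 hτ with ⟨h1, h2⟩
  have hmid := kk_tp hφ (by norm_num : (-2:ℝ) < 2) (by norm_num : (-2:ℝ) ≤ 0) (by norm_num : (0:ℝ) ≤ 2)
  -- hmid : 0 ≤ 2 φ(-2) + 2 φ 2 - 4 φ 0
  have hMm : 0 ≤ M - m := by nlinarith
  rcases le_or_gt 0 τ with h0 | h0
  · have tp1 := kk_tp hφ (by norm_num : (0:ℝ) < 2) h0 (by linarith)
    have tp2 := kk_tp hφ (by linarith : (-2:ℝ) < τ) (by norm_num) h0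
    -- tp1 : 0 ≤ (2-τ) φ0 + τ φ2 - 2 φτ ;  tp2 : 0 ≤ τ φ(-2) + 2 φτ - (τ+2) φ0
    have p1 : τ * (φ 2 - φ 0) ≤ τ * (M - m) :=
      mul_le_mul_of_nonneg_left (by linarith) h0
    have p2 : τ * (m - M) ≤ τ * (φ 0 - φ (-2)) :=
      mul_le_mul_of_nonneg_left (by linarith) h0
    have hp : 0 ≤ (M - m) * τ := mul_nonneg hMm h0
    rw [abs_of_nonneg h0, abs_le]
    constructor <;> nlinarith
  · have tp1 := kk_tp hφ (by linarith : (-2:ℝ) < 0) (by linarith) h0.le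
    have tp2 := kk_tp hφ (by linarith : τ < 2) (by linarith : τ ≤ 0) (by norm_num)
    -- tp1 : 0 ≤ (-τ) φ(-2) + (τ+2) φ0 - 2 φτ ; tp2 : 0 ≤ 2 φτ + (-τ) φ2 - (2-τ) φ0
    have p1 : (-τ) * (φ (-2) - φ 0) ≤ (-τ) * (M - m) :=
      mul_le_mul_of_nonneg_left (by linarith) (by linarith)
    have p2 : (-τ) * (m - M) ≤ (-τ) * (φ 0 - φ 2) :=
      mul_le_mul_of_nonneg_left (by linarith) (by linarith)
    have hp : 0 ≤ (M - m) * (-τ) := mul_nonneg hMm (by linarith)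
    rw [abs_of_neg h0, abs_le]
    constructor <;> nlinarith
open Filter Function Set

section PiLip

variable {ι : Type*} [Fintype ι] [DecidableEq ι] {g : (ι → ℝ) → ℝ}
variable (hg : ∀ (t : ι → ℝ) (j : ι), ConvexOn ℝ Set.univ (fun τ : ℝ => g (Function.update t j τ)))

private lemma kk_E_nonempty :
    (Fintype.piFinset (fun _ : ι => ({1, -1} : Finset ℝ))).Nonempty :=
  ⟨fun _ => 1, by simp [Fintype.mem_piFinset]⟩

include hg

/-- upper bound by vertex max on the box of radius ρ -/
private lemma kk_boxU {ρ : ℝ} (hρ : 0 < ρ) (t : ι → ℝ) (ht : ∀ i, |t i| ≤ ρ) :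
    g t ≤ (Fintype.piFinset (fun _ : ι => ({1, -1} : Finset ℝ))).sup'
      kk_E_nonempty (fun ε => g (fun i => ρ * ε i)) := by
  classical
  set M := (Fintype.piFinset (fun _ : ι => ({1, -1} : Finset ℝ))).sup'
      kk_E_nonempty (fun ε => g (fun i => ρ * ε i)) with hM
  suffices H : ∀ s : Finset ι, ∀ t : ι → ℝ, (∀ i, |t i| ≤ ρ) →
      (∀ i ∉ s, t i = ρ ∨ t i = -ρ) → g t ≤ M by
    exact H Finset.univ t ht (fun i hi => absurd (Finset.mem_univ i) hi)
  intro s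
  induction s using Finset.induction_on with
  | empty =>
    intro t ht hts
    have hε : (fun i => (t i) / ρ) ∈ Fintype.piFinset (fun _ : ι => ({1, -1} : Finset ℝ)) := by
      simp only [Fintype.mem_piFinset, Finset.mem_insert, Finset.mem_singleton]
      intro i
      rcases hts i (by simp) with h | h
      · left; rw [h]; field_simp
      · right; rw [h]; field_simp
    have := Finset.le_sup' (fun ε => g (fun i => ρ * ε i)) hε
    have e : (fun i => ρ * (t i / ρ)) = t := by
      funext i; field_simp
    rw [e] at this
    exact this
  | @insert j s hj IH =>
    intro t ht hts
    have hPP : g (Function.update t j ρ) ≤ M := by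
      refine IH _ (fun i => ?_) (fun i hi => ?_)
      · rcases eq_or_ne i j with rfl | hij
        · simp [abs_of_pos hρ]
        · simp [Function.update_of_ne hij]; exact ht i
      · rcases eq_or_ne i j with rfl | hij
        · left; simp
        · simp [Function.update_of_ne hij]
          exact hts i (by simp [hij, hi])
    have hNN : g (Function.update t j (-ρ)) ≤ M := by
      refine IH _ (fun i => ?_) (fun i hi => ?_)
      · rcases eq_or_ne i j with rfl | hij
        · simp [abs_of_pos hρ, abs_neg]
        · simp [Function.update_of_ne hij]; exact ht i
      · rcases eq_or_ne i j with rfl | hij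
        · right; simp
        · simp [Function.update_of_ne hij]
          exact hts i (by simp [hij, hi])
    have hφ := hg t j
    have hseg : t j ∈ segment ℝ (-ρ) ρ := by
      rw [segment_eq_Icc (by linarith)]
      exact abs_le.1 (ht j)
    have := hφ.le_on_segment (mem_univ (-ρ)) (mem_univ ρ) hseg
    rw [Function.update_eq_self] at this
    exact le_trans this (max_le hNN hPP)

/-- lower bound on the box of radius ρ -/
private lemma kk_boxL {ρ : ℝ} (hρ : 0 < ρ) {M : ℝ}
    (hMbd : ∀ t : ι → ℝ, (∀ i, |t i| ≤ ρ) → g t ≤ M)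
    (t : ι → ℝ) (ht : ∀ i, |t i| ≤ ρ) :
    (2:ℝ)^(Fintype.card ι) * (g 0 - M) + M ≤ g t := by
  classical
  suffices H : ∀ s : Finset ι, ∀ t : ι → ℝ, (∀ i, |t i| ≤ ρ) →
      (∀ i ∉ s, t i = 0) → (2:ℝ)^(s.card) * (g 0 - M) + M ≤ g t by
    have h0M : g 0 - M ≤ 0 := by
      have := hMbd 0 (fun i => by simp [hρ.le]); linarith
    have := H Finset.univ t ht (fun i hi => absurd (Finset.mem_univ i) hi)
    have hcard : (Finset.univ : Finset ι).card = Fintype.card ι := rfl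
    rw [hcard] at this
    exact this
  intro s
  induction s using Finset.induction_on with
  | empty =>
    intro t ht hts
    have : t = 0 := funext fun i => hts i (by simp)
    rw [this]; norm_num
  | @insert j s hj IH =>
    intro t ht hts
    have h0 : ∀ i, |Function.update t j 0 i| ≤ ρ := by
      intro i; rcases eq_or_ne i j with rfl | hij
      · simp [hρ.le]
      · simp [Function.update_of_ne hij]; exact ht i
    have hIH := IH (Function.update t j 0) h0 (fun i hi => by
      rcases eq_or_ne i j with rfl | hij
      · simp
      · simp [Function.update_of_ne hij]; exact hts i (by simp [hij, hi]))
    have hrefl : g (Function.update t j (-(t j))) ≤ M := by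
      refine hMbd _ (fun i => ?_)
      rcases eq_or_ne i j with rfl | hij
      · simp [abs_neg]; exact ht i
      · simp [Function.update_of_ne hij]; exact ht i
    have hφ := hg t j
    have hmid := hφ.2 (mem_univ (t j)) (mem_univ (-(t j)))
      (by norm_num : (0:ℝ) ≤ 1/2) (by norm_num : (0:ℝ) ≤ 1/2) (by norm_num)
    simp only [smul_eq_mul] at hmid
    have e : (1/2 : ℝ) * (t j) + (1/2) * (-(t j)) = 0 := by ring
    rw [e] at hmid
    rw [Function.update_eq_self] at hmid
    -- hmid : g (update t j 0) ≤ 1/2 g t + 1/2 g (update t j (-(t j)))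
    have hcard : (insert j s).card = s.card + 1 := Finset.card_insert_of_notMem hj
    rw [hcard, pow_succ]
    have h0M : g 0 - M ≤ 0 := by
      have := hMbd 0 (fun i => by simp [hρ.le]); linarith
    nlinarith [hIH, hrefl, hmid]
  
/-- Lipschitz bound at 0 for separately convex functions on the unit box -/
private lemma kk_piLip : ∃ C > 0, ∀ t : ι → ℝ, (∀ i, |t i| ≤ 1) →
    |g t - g 0| ≤ C * ∑ i, |t i| := by
  classical
  set M := (Fintype.piFinset (fun _ : ι => ({1, -1} : Finset ℝ))).sup'
      kk_E_nonempty (fun ε => g ((2:ℝ) * ε ·)) with hMdef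
  have hM2 : ∀ t : ι → ℝ, (∀ i, |t i| ≤ 2) → g t ≤ M := by
    intro t ht
    have := kk_boxU hg (by norm_num : (0:ℝ) < 2) t ht
    exact this
  set m := (2:ℝ)^(Fintype.card ι) * (g 0 - M) + M with hmdef
  have hm2 : ∀ t : ι → ℝ, (∀ i, |t i| ≤ 2) → m ≤ g t :=
    fun t ht => kk_boxL hg (by norm_num) hM2 t ht
  have hMm : 0 ≤ M - m := by
    have h1 := hm2 0 (fun i => by norm_num)
    have h2 := hM2 0 (fun i => by norm_num)
    linarith
  refine ⟨(M - m) + 1, by linarith, ?_⟩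
  suffices H : ∀ s : Finset ι, ∀ t : ι → ℝ, (∀ i, |t i| ≤ 1) →
      (∀ i ∉ s, t i = 0) → |g t - g 0| ≤ (M - m) * ∑ i ∈ s, |t i| by
    intro t ht
    have := H Finset.univ t ht (fun i hi => absurd (Finset.mem_univ i) hi)
    have hsum : 0 ≤ ∑ i, |t i| := Finset.sum_nonneg (fun i _ => abs_nonneg _)
    calc |g t - g 0| ≤ (M - m) * ∑ i, |t i| := this
      _ ≤ ((M - m) + 1) * ∑ i, |t i| := by nlinarith
  intro s
  induction s using Finset.induction_on with
  | empty =>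
    intro t ht hts
    have : t = 0 := funext fun i => hts i (by simp)
    simp [this]
  | @insert j s hj IH =>
    intro t ht hts
    have h0 : ∀ i, |Function.update t j 0 i| ≤ 1 := by
      intro i; rcases eq_or_ne i j with rfl | hij
      · simp
      · simp [Function.update_of_ne hij]; exact ht i
    have hIH := IH (Function.update t j 0) h0 (fun i hi => by
      rcases eq_or_ne i j with rfl | hij
      · simp
      · simp [Function.update_of_ne hij]; exact hts i (by simp [hij, hi]))
    -- one-coordinate step, using kk_slope on φ τ = g (update t j τ) shifted to base update t j 0
    have hφconv : ConvexOn ℝ Set.univ (fun τ : ℝ => g (Function.update t j τ)) := hg t j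
    have hstep : |g t - g (Function.update t j 0)| ≤ (M - m) * |t j| := by
      have hb1 : g (Function.update t j 2) ≤ M := by
        refine hM2 _ (fun i => ?_)
        rcases eq_or_ne i j with rfl | hij
        · simp
        · simp [Function.update_of_ne hij]; linarith [ht i]
      have hb2 : g (Function.update t j (-2)) ≤ M := by
        refine hM2 _ (fun i => ?_)
        rcases eq_or_ne i j with rfl | hij
        · simp
        · simp [Function.update_of_ne hij]; linarith [ht i]
      have hb0 : m ≤ g (Function.update t j 0) := by
        refine hm2 _ (fun i => ?_)
        rcases eq_or_ne i j with rfl | hij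
        · simp
        · simp [Function.update_of_ne hij]; linarith [ht i]
      have := kk_slope hφconv hb0 hb1 hb2 (ht j)
      rwa [Function.update_eq_self] at this
    have hsum : ∑ i ∈ insert j s, |t i| = |t j| + ∑ i ∈ s, |t i| := Finset.sum_insert hj
    have hsum2 : ∑ i ∈ s, |Function.update t j 0 i| = ∑ i ∈ s, |t i| := by
      refine Finset.sum_congr rfl (fun i hi => ?_)
      have hij : i ≠ j := fun h => hj (h ▸ hi)
      simp [Function.update_of_ne hij]
    rw [hsum2] at hIH
    rw [hsum]
    calc |g t - g 0| ≤ |g t - g (Function.update t j 0)| + |g (Function.update t j 0) - g 0| := by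
          have := abs_sub_abs_le_abs_sub (g t) (g 0); exact abs_sub_le _ _ _
      _ ≤ (M - m) * |t j| + (M - m) * ∑ i ∈ s, |t i| := add_le_add hstep hIH
      _ = (M - m) * (|t j| + ∑ i ∈ s, |t i|) := by ring

end PiLip
open Filter Function Set in
private lemma kk_lipAt {V : Type*} [NormedAddCommGroup V] [NormedSpace ℝ V]
    [FiniteDimensional ℝ V] (f : V → ℝ) (D : Set V)
    (hspan : Submodule.span ℝ D = ⊤)
    (hconv : ∀ e ∈ D, ∀ x : V, ConvexOn ℝ Set.univ (fun t : ℝ => f (x + t • e)))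
    (a : V) :
    ∃ C > 0, ∃ δ > 0, ∀ u : V, ‖u‖ ≤ δ → |f (a + u) - f a| ≤ C * ‖u‖ := by
  classical
  obtain ⟨b, hbD, hbspan, hbli⟩ := exists_linearIndependent ℝ D
  haveI : Fintype ↥b := hbli.setFinite.fintype
  set hB : Module.Basis ↥b ℝ V := Module.Basis.mk hbli (by rw [Subtype.range_coe, hbspan, hspan]) with hBdef
  set g : (↥b → ℝ) → ℝ := fun t => f (a + ∑ i, t i • (i : V)) with hgdef
  have hg : ∀ (t : ↥b → ℝ) (j : ↥b), ConvexOn ℝ Set.univ (fun τ : ℝ => g (Function.update t j τ)) := by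
    intro t j
    have he : (fun τ : ℝ => g (Function.update t j τ))
        = fun τ : ℝ => f ((a + ∑ i ∈ Finset.univ \ {j}, t i • (i : V)) + τ • (j : V)) := by
      funext τ
      have e1 : (fun i : ↥b => (Function.update t j τ) i • (i : V))
          = Function.update (fun i : ↥b => t i • (i : V)) j (τ • (j : V)) := by
        funext i
        rcases eq_or_ne i j with rfl | hij
        · simp
        · simp [Function.update_of_ne hij]
      simp only [hgdef]
      rw [e1, Finset.sum_update_of_mem (Finset.mem_univ j)]
      congr 1
      abel
    rw [he]
    exact hconv (j : V) (hbD j.2) _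
  obtain ⟨C, hC, hlip⟩ := kk_piLip hg
  -- coordinate control
  set T := LinearMap.toContinuousLinearMap (hB.equivFun.toLinearMap) with hTdef
  set K := ‖T‖ + 1 with hKdef
  have hK : 0 < K := by positivity
  have hcoord : ∀ (v : V) (i : ↥b), |hB.equivFun v i| ≤ K * ‖v‖ := by
    intro v i
    have h1 : |hB.equivFun v i| ≤ ‖hB.equivFun v‖ := by
      simpa [Real.norm_eq_abs] using norm_le_pi_norm (hB.equivFun v) i
    have h2 : ‖T v‖ ≤ ‖T‖ * ‖v‖ := T.le_opNorm v
    have h3 : (T v : ↥b → ℝ) = hB.equivFun v := rfl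
    rw [h3] at h2
    nlinarith [norm_nonneg v, norm_nonneg (hB.equivFun v)]
  refine ⟨C * (Fintype.card ↥b) * K + 1, by positivity, K⁻¹, by positivity, ?_⟩
  intro u hu
  set t := hB.equivFun u with htdef
  have htb : ∀ i, |t i| ≤ 1 := by
    intro i
    have := hcoord u i
    calc |t i| ≤ K * ‖u‖ := this
      _ ≤ K * K⁻¹ := by
          exact mul_le_mul_of_nonneg_left hu hK.le
      _ = 1 := mul_inv_cancel₀ hK.ne'
  have hgu : g t = f (a + u) := by
    simp only [hgdef]
    congr 1
    have : ∑ i, t i • (i : V) = ∑ i, t i • hB i := by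
      refine Finset.sum_congr rfl (fun i _ => ?_)
      rw [hBdef, Module.Basis.mk_apply]
    rw [this, htdef, hB.sum_equivFun]
  have hg0 : g 0 = f a := by simp [hgdef]
  have := hlip t htb
  rw [hgu, hg0] at this
  have hsum : ∑ i, |t i| ≤ (Fintype.card ↥b) * (K * ‖u‖) := by
    calc ∑ i, |t i| ≤ ∑ _i : ↥b, K * ‖u‖ := Finset.sum_le_sum (fun i _ => hcoord u i)
      _ = (Fintype.card ↥b) * (K * ‖u‖) := by
          rw [Finset.sum_const, Finset.card_univ, nsmul_eq_mul]
  calc |f (a + u) - f a| ≤ C * ∑ i, |t i| := this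
    _ ≤ C * ((Fintype.card ↥b) * (K * ‖u‖)) := mul_le_mul_of_nonneg_left hsum hC.le
    _ = (C * (Fintype.card ↥b) * K) * ‖u‖ := by ring
    _ ≤ (C * (Fintype.card ↥b) * K + 1) * ‖u‖ := by nlinarith [norm_nonneg u]
open Filter Function Set Topology in
private lemma kk_exists_p {V : Type*} [NormedAddCommGroup V] [NormedSpace ℝ V]
    [FiniteDimensional ℝ V] (f : V → ℝ) (D : Set V)
    (hspan : Submodule.span ℝ D = ⊤)
    (hhom : ∀ α : ℝ, 0 ≤ α → ∀ x : V, f (α • x) = α * f x)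
    (hconv : ∀ e ∈ D, ∀ x : V, ConvexOn ℝ Set.univ (fun t : ℝ => f (x + t • e)))
    {e₀ : V} (he₀D : e₀ ∈ D) :
    ∃ p : V → ℝ, (∀ x, p x ≤ f x) ∧
      (∀ x : V, ∀ s : ℝ, p (x + s • e₀) = p x + s * f e₀) ∧
      (∀ α : ℝ, 0 ≤ α → ∀ x, p (α • x) = α * p x) ∧
      (∀ e ∈ D, ∀ x : V, ConvexOn ℝ Set.univ (fun t : ℝ => p (x + t • e))) ∧
      p 0 = 0 := by
  classical
  obtain ⟨C, hC, δ, hδ, hlip⟩ := kk_lipAt f D hspan hconv e₀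
  set ψ : V → ℝ → ℝ := fun x t => f (x + t • e₀) - t * f e₀ with hψdef
  have hf0 : f 0 = 0 := by
    have := hhom 0 le_rfl 0
    simpa using this
  -- bound for large T
  have hψbig : ∀ (x : V) (T : ℝ), max (‖x‖ / δ) 1 ≤ T → |ψ x T| ≤ C * ‖x‖ := by
    intro x T hT
    have hT1 : (1:ℝ) ≤ T := le_trans (le_max_right _ _) hT
    have hT0 : (0:ℝ) < T := by linarith
    have hxT : ‖x‖ ≤ T * δ := by
      have := le_trans (le_max_left _ _) hT
      rw [div_le_iff₀ hδ] at this; linarith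
    have he : x + T • e₀ = T • (e₀ + T⁻¹ • x) := by
      rw [smul_add, smul_inv_smul₀ hT0.ne']
      abel
    have hfT : f (x + T • e₀) = T * f (e₀ + T⁻¹ • x) := by
      rw [he, hhom T hT0.le]
    have hnrm : ‖T⁻¹ • x‖ ≤ δ := by
      rw [norm_smul, norm_inv, Real.norm_eq_abs, abs_of_pos hT0]
      rw [inv_mul_le_iff₀ hT0]; linarith
    have hl := hlip (T⁻¹ • x) hnrm
    have hψT : ψ x T = T * (f (e₀ + T⁻¹ • x) - f e₀) := by
      simp only [hψdef]
      rw [hfT]; ring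
    rw [hψT, abs_mul, abs_of_pos hT0]
    calc T * |f (e₀ + T⁻¹ • x) - f e₀| ≤ T * (C * ‖T⁻¹ • x‖) :=
          mul_le_mul_of_nonneg_left hl hT0.le
      _ = C * (T * ‖T⁻¹ • x‖) := by ring
      _ = C * ‖x‖ := by
          rw [norm_smul, norm_inv, Real.norm_eq_abs, abs_of_pos hT0]
          congr 1
          field_simp
  have hφ : ∀ x : V, ConvexOn ℝ Set.univ (fun t : ℝ => f (x + t • e₀)) := hconv e₀ he₀D
  have hψconv : ∀ x, ConvexOn ℝ Set.univ (ψ x) := by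
    intro x
    have : ψ x = fun t => f (x + t • e₀) + t * (-(f e₀)) := by
      funext t; simp only [hψdef]; ring
    rw [this]
    exact (hφ x).add (kk_lin_convexOn (-(f e₀)))
  -- antitone
  have hanti : ∀ x, Antitone (ψ x) := by
    intro x t t' htt'
    rcases eq_or_lt_of_le htt' with rfl | hlt
    · exact le_rfl
    -- show ψ x t' ≤ ψ x t, i.e. f(x+t'e₀) - f(x+te₀) ≤ (t'-t) f e₀
    have key : f (x + t' • e₀) - f (x + t • e₀) ≤ (t' - t) * f e₀ := by
      set φt := f (x + t • e₀) with hφt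
      set φt' := f (x + t' • e₀) with hφt'
      set B : ℝ := C * ‖x‖ - φt + t * f e₀ with hBdef
      have htend : Tendsto (fun T : ℝ => (t' - t) * f e₀ + ((t' - t) * B) * (T - t)⁻¹)
          atTop (𝓝 ((t' - t) * f e₀)) := by
        have h1 : Tendsto (fun T : ℝ => (T - t)⁻¹) atTop (𝓝 0) :=
          tendsto_inv_atTop_zero.comp (tendsto_atTop_add_const_right atTop (-t) tendsto_id)
        have h2 := (h1.const_mul ((t' - t) * B)).const_add ((t' - t) * f e₀)
        simpa using h2
      refine ge_of_tendsto htend ?_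
      filter_upwards [eventually_ge_atTop (max (‖x‖ / δ) 1), eventually_gt_atTop t'] with T hT1 hT2
      have hTt : t < T := lt_trans hlt hT2
      have hTtpos : (0:ℝ) < T - t := by linarith
      have tp := kk_tp (hφ x) hTt htt' hT2.le
      -- tp : 0 ≤ (T - t') f(x+te₀) + (t' - t) f(x+Te₀) - (T - t) f(x+t'e₀)
      have hfT : f (x + T • e₀) ≤ T * f e₀ + C * ‖x‖ := by
        have := (abs_le.1 (hψbig x T hT1)).2
        simp only [hψdef] at this; linarith
      have p3 : (t' - t) * f (x + T • e₀) ≤ (t' - t) * (T * f e₀ + C * ‖x‖) :=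
        mul_le_mul_of_nonneg_left hfT (by linarith)
      have h1 : (T - t) * (φt' - φt) ≤ (t' - t) * (T * f e₀ + C * ‖x‖ - φt) := by
        rw [hφt, hφt']
        nlinarith [tp, p3]
      have h2 : φt' - φt ≤ (t' - t) * (T * f e₀ + C * ‖x‖ - φt) / (T - t) := by
        rw [le_div_iff₀ hTtpos]
        linarith [h1]
      refine le_trans h2 (le_of_eq ?_)
      rw [hBdef]
      field_simp
      ring
    simp only [hψdef]
    linarith [key]
  -- bounded below
  have hbdd : ∀ x, BddBelow (Set.range (ψ x)) := by
    intro x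
    refine ⟨-(C * ‖x‖), ?_⟩
    rintro y ⟨s, rfl⟩
    rcases le_total s (max (‖x‖ / δ) 1) with hs | hs
    · exact le_trans (abs_le.1 (hψbig x _ le_rfl)).1 (hanti x hs)
    · exact (abs_le.1 (hψbig x s hs)).1
  set p : V → ℝ := fun x => ⨅ s : ℝ, ψ x s with hpdef
  have htend : ∀ x, Tendsto (ψ x) atTop (𝓝 (p x)) :=
    fun x => tendsto_atTop_ciInf (hanti x) (hbdd x)
  have hP1 : ∀ x, p x ≤ f x := by
    intro x
    have := ciInf_le (hbdd x) 0
    simpa [hψdef] using this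
  have hp0 : p 0 = 0 := by
    have h1 : Tendsto (ψ 0) atTop (𝓝 0) := by
      have heq : (fun s : ℝ => (0:ℝ)) =ᶠ[atTop] ψ 0 := by
        filter_upwards [eventually_ge_atTop (0:ℝ)] with s hs
        simp only [hψdef]
        rw [zero_add, hhom s hs e₀]
        ring
      exact Tendsto.congr' heq tendsto_const_nhds
    exact tendsto_nhds_unique (htend 0) h1
  refine ⟨p, hP1, ?_, ?_, ?_, hp0⟩
  · -- shift formula
    intro x s
    have h1 : Tendsto (ψ (x + s • e₀)) atTop (𝓝 (p x + s * f e₀)) := by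
      have heq : (fun u : ℝ => ψ x (u + s) + s * f e₀) = ψ (x + s • e₀) := by
        funext u
        simp only [hψdef]
        rw [show x + s • e₀ + u • e₀ = x + (u + s) • e₀ by rw [add_smul]; abel]
        ring
      rw [← heq]
      have h2 : Tendsto (fun u : ℝ => ψ x (u + s)) atTop (𝓝 (p x)) :=
        (htend x).comp (tendsto_atTop_add_const_right atTop s tendsto_id)
      exact h2.add_const (s * f e₀)
    exact tendsto_nhds_unique (htend (x + s • e₀)) h1
  · -- homogeneity
    intro α hα x
    rcases eq_or_lt_of_le hα with rfl | hαpos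
    · rw [zero_smul, hp0]; ring
    · have h1 : Tendsto (ψ (α • x)) atTop (𝓝 (α * p x)) := by
        have heq : (fun u : ℝ => α * ψ x (α⁻¹ * u)) = ψ (α • x) := by
          funext u
          simp only [hψdef]
          rw [show α • x + u • e₀ = α • (x + (α⁻¹ * u) • e₀) by
            rw [smul_add, smul_smul, mul_inv_cancel_left₀ hαpos.ne']]
          rw [hhom α hαpos.le]
          field_simp
        rw [← heq]
        have h2 : Tendsto (fun u : ℝ => ψ x (α⁻¹ * u)) atTop (𝓝 (p x)) :=
          (htend x).comp (Filter.Tendsto.const_mul_atTop (by positivity) tendsto_id)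
        exact h2.const_mul α
      exact tendsto_nhds_unique (htend (α • x)) h1
  · -- D-convexity
    intro e heD x
    refine ⟨convex_univ, ?_⟩
    intro u₁ _ u₂ _ a b ha hb hab
    simp only [smul_eq_mul]
    have hptw : ∀ s : ℝ, ψ (x + (a * u₁ + b * u₂) • e) s
        ≤ a * ψ (x + u₁ • e) s + b * ψ (x + u₂ • e) s := by
      intro s
      have hc := (hconv e heD (x + s • e₀)).2 (mem_univ u₁) (mem_univ u₂) ha hb hab
      simp only [smul_eq_mul] at hc
      have e1 : x + (a * u₁ + b * u₂) • e + s • e₀ = x + s • e₀ + (a * u₁ + b * u₂) • e := by abel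
      have e2 : x + u₁ • e + s • e₀ = x + s • e₀ + u₁ • e := by abel
      have e3 : x + u₂ • e + s • e₀ = x + s • e₀ + u₂ • e := by abel
      simp only [hψdef]
      rw [e1, e2, e3]
      have : s * f e₀ = a * (s * f e₀) + b * (s * f e₀) := by
        rw [← add_mul, hab]; ring
      nlinarith [hc]
    have hl : Tendsto (fun s => a * ψ (x + u₁ • e) s + b * ψ (x + u₂ • e) s) atTop
        (𝓝 (a * p (x + u₁ • e) + b * p (x + u₂ • e))) :=
      ((htend (x + u₁ • e)).const_mul a).add ((htend (x + u₂ • e)).const_mul b)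
    exact le_of_tendsto_of_tendsto' (htend (x + (a * u₁ + b * u₂) • e)) hl hptw
open Filter Function Set Topology in
private theorem kk_aux : ∀ (n : ℕ) (V : Type u) [NormedAddCommGroup V] [NormedSpace ℝ V]
    [FiniteDimensional ℝ V], Module.finrank ℝ V ≤ n → ∀ (f : V → ℝ) (D : Set V),
    Submodule.span ℝ D = ⊤ →
    (∀ α : ℝ, 0 ≤ α → ∀ x : V, f (α • x) = α * f x) →
    (∀ e ∈ D, ∀ x : V, ConvexOn ℝ Set.univ (fun t : ℝ => f (x + t • e))) →
    ∀ x₀ ∈ D, ∃ ℓ : V →ₗ[ℝ] ℝ, ℓ x₀ = f x₀ ∧ ∀ x : V, ℓ x ≤ f x := by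
  intro n
  induction n with
  | zero =>
    intro V _ _ _ hn f D hspan hhom hconv x₀ _
    haveI : Subsingleton V := Module.finrank_zero_iff.mp (Nat.le_zero.mp hn)
    have hf0 : f 0 = 0 := by simpa using hhom 0 le_rfl 0
    refine ⟨0, ?_, ?_⟩
    · rw [Subsingleton.elim x₀ 0, hf0]; rfl
    · intro x; rw [Subsingleton.elim x 0, hf0]; rfl
  | succ n IH =>
    intro V _ _ _ hn f D hspan hhom hconv x₀ hx₀
    have hf0 : f 0 = 0 := by simpa using hhom 0 le_rfl 0
    rcases subsingleton_or_nontrivial V with hV | hV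
    · refine ⟨0, ?_, ?_⟩
      · rw [Subsingleton.elim x₀ 0, hf0]; rfl
      · intro x; rw [Subsingleton.elim x 0, hf0]; rfl
    -- choose e₀
    obtain ⟨e₀, he₀D, he₀0, hx₀e⟩ : ∃ e₀, e₀ ∈ D ∧ e₀ ≠ 0 ∧ (x₀ = 0 ∨ x₀ = e₀) := by
      by_cases hx0 : x₀ = 0
      · by_contra h
        push_neg at h
        have hD0 : ∀ e ∈ D, e = 0 := by
          intro e heD
          by_contra he0
          exact (h e heD he0).1 hx0
        have hsub : D ⊆ ({0} : Set V) := fun e he => hD0 e he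
        have : Submodule.span ℝ D ≤ ⊥ := by
          rw [← Submodule.span_zero_singleton ℝ]
          exact Submodule.span_mono hsub
        rw [hspan] at this
        obtain ⟨v, hv⟩ := exists_ne (0 : V)
        exact hv (this Submodule.mem_top)
      · exact ⟨x₀, hx₀, hx0, Or.inr rfl⟩
    obtain ⟨p, hp_le, hp_shift, hp_hom, hp_conv, hp0⟩ :=
      kk_exists_p f D hspan hhom hconv he₀D
    obtain ⟨W, hW⟩ := Submodule.exists_isCompl (Submodule.span ℝ ({e₀} : Set V))
    set πW : V →ₗ[ℝ] ↥W :=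
      W.linearProjOfIsCompl (Submodule.span ℝ ({e₀} : Set V)) hW.symm with hπWdef
    set π₀ : V →ₗ[ℝ] ↥(Submodule.span ℝ ({e₀} : Set V)) :=
      (Submodule.span ℝ ({e₀} : Set V)).linearProjOfIsCompl W hW with hπ₀def
    set lam0 : V →ₗ[ℝ] ℝ :=
      ((LinearEquiv.toSpanNonzeroSingleton ℝ V e₀ he₀0).symm.toLinearMap).comp π₀ with hlam0def
    have hcoe : ∀ v : V, ((π₀ v : V)) = (lam0 v) • e₀ := by
      intro v
      have h2 : ((LinearEquiv.toSpanNonzeroSingleton ℝ V e₀ he₀0 (lam0 v) :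
          ↥(Submodule.span ℝ ({e₀} : Set V))) : V) = (lam0 v) • e₀ := by
        simp [LinearEquiv.toSpanNonzeroSingleton]
      have h1 : (LinearEquiv.toSpanNonzeroSingleton ℝ V e₀ he₀0) (lam0 v) = π₀ v := by
        simp only [hlam0def, LinearMap.coe_comp, LinearEquiv.coe_coe, Function.comp_apply]
        exact (LinearEquiv.apply_symm_apply _ _)
      rw [h1] at h2
      exact h2
    have hdecomp : ∀ v : V, (↑(πW v) : V) + (lam0 v) • e₀ = v := by
      intro v
      have h3 : ((π₀ v : V)) + (πW v : V) = v := Submodule.projection_add_projection_eq_self hW v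
      rw [hcoe v, add_comm] at h3
      exact h3
    have hπWe₀ : πW e₀ = 0 := by
      have : πW ((⟨e₀, Submodule.mem_span_singleton_self e₀⟩ :
          ↥(Submodule.span ℝ ({e₀} : Set V))) : V) = 0 :=
        Submodule.linearProjOfIsCompl_apply_right hW.symm _
      simpa using this
    have hπWsurj : Function.Surjective πW := by
      intro w
      exact ⟨↑w, Submodule.linearProjOfIsCompl_apply_left hW.symm w⟩
    -- the quotient data
    set q : ↥W → ℝ := fun w => p ↑w with hqdef
    set D' : Set ↥W := πW '' D with hD'def
    have hspan' : Submodule.span ℝ D' = ⊤ := by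
      rw [hD'def, ← Submodule.map_span, hspan, Submodule.map_top]
      exact LinearMap.range_eq_top.mpr hπWsurj
    have hhom' : ∀ α : ℝ, 0 ≤ α → ∀ w : ↥W, q (α • w) = α * q w := by
      intro α hα w
      simp only [hqdef, Submodule.coe_smul]
      exact hp_hom α hα ↑w
    have hconv' : ∀ ebar ∈ D', ∀ w : ↥W, ConvexOn ℝ Set.univ (fun t : ℝ => q (w + t • ebar)) := by
      rintro ebar ⟨e, heD, rfl⟩ w
      have hrep : ∀ t : ℝ, ((w + t • πW e : ↥W) : V) = (↑w + t • e) + (t * (-(lam0 e))) • e₀ := by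
        intro t
        have h1 : ((πW e : ↥W) : V) = e - (lam0 e) • e₀ := by
          have := hdecomp e
          linear_combination (norm := module) this
        push_cast [h1]
        match_scalars <;> ring
      have heq : (fun t : ℝ => q (w + t • πW e))
          = fun t : ℝ => p (↑w + t • e) + t * (-(lam0 e) * f e₀) := by
        funext t
        simp only [hqdef]
        rw [hrep t, hp_shift]
        ring
      rw [heq]
      exact (hp_conv e heD ↑w).add (by
        have := kk_lin_convexOn (-(lam0 e) * f e₀)
        simpa using this)
    have hrankW : Module.finrank ℝ ↥W ≤ n := by
      have hsum := Submodule.finrank_add_eq_of_isCompl hW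
      rw [finrank_span_singleton he₀0] at hsum
      omega
    have h0D' : (0 : ↥W) ∈ D' := ⟨e₀, he₀D, hπWe₀⟩
    obtain ⟨μ, _, hμle⟩ := IH ↥W hrankW q D' hspan' hhom' hconv' 0 h0D'
    set ℓ : V →ₗ[ℝ] ℝ := μ.comp πW + (f e₀) • lam0 with hℓdef
    have hℓapp : ∀ v : V, ℓ v = μ (πW v) + f e₀ * lam0 v := by
      intro v; simp [hℓdef]
    have hle : ∀ v : V, ℓ v ≤ f v := by
      intro v
      rw [hℓapp]
      have h1 : μ (πW v) ≤ q (πW v) := hμle (πW v)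
      have h2 : q (πW v) + f e₀ * lam0 v = p v := by
        simp only [hqdef]
        have := hp_shift (↑(πW v) : V) (lam0 v)
        rw [hdecomp v] at this
        rw [this]; ring
      linarith [hp_le v]
    refine ⟨ℓ, ?_, hle⟩
    rcases hx₀e with rfl | rfl
    · rw [map_zero, hf0]
    · have hlame0 : lam0 x₀ = 1 := by
        have h3 := hdecomp x₀
        rw [hπWe₀] at h3
        simp only [Submodule.coe_zero, zero_add] at h3
        have h1 : (lam0 x₀) • x₀ = (1:ℝ) • x₀ := by rw [one_smul, h3]
        exact smul_left_injective ℝ he₀0 h1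
      rw [hℓapp, hπWe₀, map_zero, hlame0]
      ring

/-- Kirchheim–Kristensen: a positively 1-homogeneous function on a
finite-dimensional normed space that is convex along the directions of a
spanning cone `D` admits at every point of `D` a supporting linear functional. -/
theorem kirchheim_kristensen {V : Type*} [NormedAddCommGroup V] [NormedSpace ℝ V]
    [FiniteDimensional ℝ V] (f : V → ℝ) (D : Set V)
    (hcone : ∀ x ∈ D, ∀ t : ℝ, 0 < t → t • x ∈ D)
    (hspan : Submodule.span ℝ D = ⊤)
    (hhom : ∀ α : ℝ, 0 ≤ α → ∀ x : V, f (α • x) = α * f x)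
    (hconv : ∀ e ∈ D, ∀ x : V, ConvexOn ℝ Set.univ (fun t : ℝ => f (x + t • e))) :
    ∀ x₀ ∈ D, ∃ ℓ : V →ₗ[ℝ] ℝ, ℓ x₀ = f x₀ ∧ ∀ x : V, ℓ x ≤ f x :=
  kk_aux (Module.finrank ℝ V) V le_rfl f D hspan hhom hconv
end

section
/- If f : ℝ^{d×d}_sym → ℝ is separately convex along symmetric rank-one directions a⊙b (a,b ∈ ℝᵈ) and has linear growth, i.e. |f(A)| ≤ M(1 + |A|) for all A, then f is globally Lipschitz: there is L > 0 with |f(A) − f(B)| ≤ L|A − B| for all symmetric A, B. -/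
open Matrix

attribute [local instance] Matrix.normedAddCommGroup
attribute [local instance] Matrix.normedSpace

/-- Symmetrized tensor product `a ⊙ b := (a bᵀ + b aᵀ)/2`. -/
noncomputable def sprod {d : ℕ} (a b : Fin d → ℝ) : Matrix (Fin d) (Fin d) ℝ :=
  Matrix.of fun i j => (a i * b j + b i * a j) / 2

lemma sprod_symm {d : ℕ} (a b : Fin d → ℝ) : (sprod a b)ᵀ = sprod a b := by
  ext i j
  simp only [sprod, transpose_apply, Matrix.of_apply]
  ring

lemma sprod_single_norm_le {d : ℕ} (i j : Fin d) :
    ‖sprod (Pi.single i (1:ℝ)) (Pi.single j 1)‖ ≤ 1 := by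
  rw [Matrix.norm_le_iff zero_le_one]
  intro k l
  simp only [sprod, Matrix.of_apply, Real.norm_eq_abs, Pi.single_apply]
  split_ifs <;> norm_num [abs_of_nonneg]

lemma sprod_decomp {d : ℕ} (S : Matrix (Fin d) (Fin d) ℝ) (hS : Sᵀ = S) :
    ∑ p : Fin d × Fin d, S p.1 p.2 • sprod (Pi.single p.1 1) (Pi.single p.2 1) = S := by
  ext k l
  rw [Matrix.sum_apply]
  have hSsym : S l k = S k l := by
    conv_lhs => rw [← hS, transpose_apply]
  rw [← Finset.univ_product_univ, Finset.sum_product]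
  simp only [Matrix.smul_apply, sprod, Matrix.of_apply, Pi.single_apply, smul_eq_mul]
  simp only [add_div, ite_div, zero_div, mul_add, mul_ite, mul_zero, mul_one,
    Finset.sum_add_distrib, Finset.sum_ite_eq, Finset.sum_ite_eq', Finset.mem_univ, if_true,
    mul_div_assoc]
  have h2 : ∀ x : Fin d,
      (∑ x_1 : Fin d, if l = x then if k = x_1 then S x x_1 * (1 / 2) else 0 else 0)
        = if l = x then S x k * (1 / 2) else 0 := by
    intro x
    split_ifs with h <;> simp
  simp only [h2, Finset.sum_ite_eq, Finset.mem_univ, if_true]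
  rw [hSsym]
  ring
lemma growth_c_nonneg (g : ℝ → ℝ) (K c : ℝ) (hbd : ∀ t, |g t| ≤ K + c * |t|) : 0 ≤ c := by
  by_contra hc
  push_neg at hc
  set T : ℝ := (|K| + 1) / (-c) with hT
  have hT0 : 0 < T := div_pos (by positivity) (by linarith)
  have h1 : (0:ℝ) ≤ K + c * |T| := (abs_nonneg (g T)).trans (hbd T)
  rw [abs_of_pos hT0] at h1
  have h2 : c * T = -(|K| + 1) := by
    rw [hT, mul_div_assoc', div_eq_iff (by linarith : -c ≠ 0)]; ring
  rw [h2] at h1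
  have := le_abs_self K
  linarith

lemma lip1_core (g : ℝ → ℝ) (hg : ConvexOn ℝ Set.univ g) (K c : ℝ) (hc : 0 ≤ c)
    (hbd : ∀ t, |g t| ≤ K + c * |t|) {s t : ℝ} (hst : s < t) :
    g t - g s ≤ c * (t - s) := by
  refine le_of_forall_pos_le_add fun ε hε => ?_
  set C : ℝ := |K| + c * |s| + |g s| + 1 with hCdef
  have hC0 : 0 < C := by positivity
  set X : ℝ := (t - s) * C + c * (t - s) * s + ε * s with hXdef
  set R : ℝ := max (max t 0 + 1) (X / ε + 1) with hRdef
  have hRt : t < R := lt_of_lt_of_le (by have := le_max_left t 0; linarith) (le_max_left _ _)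
  have hR0 : 0 < R := lt_of_lt_of_le (by have := le_max_right t 0; linarith) (le_max_left _ _)
  have hRs : s < R := hst.trans hRt
  have hRsne : R - s ≠ 0 := by linarith
  have hεR : X ≤ ε * R := by
    have h1 : X / ε + 1 ≤ R := le_max_right _ _
    have h2 : X / ε ≤ R - 1 := by linarith
    have := (div_le_iff₀ hε).mp h2
    nlinarith
  set θ : ℝ := (t - s) / (R - s) with hθdef
  have hθ0 : 0 ≤ θ := div_nonneg (by linarith) (by linarith)
  have hθ1 : 1 - θ ≥ 0 := by
    have : θ ≤ 1 := by rw [div_le_one (by linarith)]; linarith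
    linarith
  have hcomb : (1 - θ) • s + θ • R = t := by
    field_simp [hθdef]
    have h : θ * (R - s) = t - s := div_mul_cancel₀ (t - s) hRsne
    linear_combination h
  have hconv := hg.2 (Set.mem_univ s) (Set.mem_univ R) hθ1 hθ0 (by ring)
  rw [hcomb] at hconv
  simp only [smul_eq_mul] at hconv
  have hgR : g R ≤ K + c * R := by
    have h := (le_abs_self (g R)).trans (hbd R)
    rwa [abs_of_pos hR0] at h
  have hnum : g R - g s ≤ C + c * R := by
    have h1 : K ≤ |K| := le_abs_self K
    have h2 : -g s ≤ |g s| := neg_le_abs (g s)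
    have h3 : 0 ≤ c * |s| := by positivity
    simp only [hCdef]
    linarith
  have hstep : g t - g s ≤ θ * (C + c * R) := by
    have h2 : θ * (g R - g s) ≤ θ * (C + c * R) := mul_le_mul_of_nonneg_left hnum hθ0
    nlinarith
  have hfinal : θ * (C + c * R) ≤ c * (t - s) + ε := by
    rw [hθdef, div_mul_eq_mul_div, div_le_iff₀ (by linarith : (0:ℝ) < R - s)]
    nlinarith
  linarith

lemma lip1 (g : ℝ → ℝ) (hg : ConvexOn ℝ Set.univ g) (K c : ℝ)
    (hbd : ∀ t, |g t| ≤ K + c * |t|) (s t : ℝ) :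
    |g t - g s| ≤ c * |t - s| := by
  have hc : 0 ≤ c := growth_c_nonneg g K c hbd
  have hneg : ConvexOn ℝ Set.univ (fun u => g (-u)) := by
    refine ⟨convex_univ, fun x _ y _ a b ha hb hab => ?_⟩
    simpa [neg_add, smul_neg, add_comm] using
      hg.2 (Set.mem_univ (-x)) (Set.mem_univ (-y)) ha hb hab
  have hbdneg : ∀ t, |g (-t)| ≤ K + c * |t| := fun t => by
    simpa [abs_neg] using hbd (-t)
  have key : ∀ u v : ℝ, g v - g u ≤ c * |v - u| := by
    intro u v
    rcases lt_trichotomy u v with h | h | h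
    · rw [abs_of_pos (by linarith : (0:ℝ) < v - u)]
      exact lip1_core g hg K c hc hbd h
    · simp [h]
    · have := lip1_core (fun u => g (-u)) hneg K c hc hbdneg (by linarith : -u < -v)
      simp only [neg_neg] at this
      rw [abs_of_neg (by linarith : v - u < 0)]
      linarith
  rw [abs_sub_le_iff]
  constructor
  · exact key s t
  · rw [abs_sub_comm]; exact key t s

lemma step_lip {d : ℕ} (f : Matrix (Fin d) (Fin d) ℝ → ℝ) (M : ℝ)
    (hconv : ∀ a b : Fin d → ℝ, ∀ A : Matrix (Fin d) (Fin d) ℝ, Aᵀ = A →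
      ConvexOn ℝ Set.univ (fun t : ℝ => f (A + t • sprod a b)))
    (hgrowth : ∀ A : Matrix (Fin d) (Fin d) ℝ, Aᵀ = A → |f A| ≤ M * (1 + ‖A‖))
    (hM : 0 ≤ M) (a b : Fin d → ℝ) (A : Matrix (Fin d) (Fin d) ℝ) (hA : Aᵀ = A) (t : ℝ) :
    |f (A + t • sprod a b) - f A| ≤ M * ‖sprod a b‖ * |t| := by
  have hsym : ∀ u : ℝ, (A + u • sprod a b)ᵀ = A + u • sprod a b := by
    intro u
    rw [transpose_add, transpose_smul, sprod_symm, hA]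
  have hbd : ∀ u : ℝ, |f (A + u • sprod a b)| ≤ (M * (1 + ‖A‖)) + (M * ‖sprod a b‖) * |u| := by
    intro u
    refine (hgrowth _ (hsym u)).trans ?_
    have h1 : ‖A + u • sprod a b‖ ≤ ‖A‖ + |u| * ‖sprod a b‖ := by
      refine (norm_add_le _ _).trans ?_
      rw [norm_smul, Real.norm_eq_abs]
    nlinarith [abs_nonneg u, norm_nonneg (sprod a b)]
  have := lip1 (fun u : ℝ => f (A + u • sprod a b)) (hconv a b A hA)
    (M * (1 + ‖A‖)) (M * ‖sprod a b‖) hbd 0 t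
  simpa using this

/-- A function on symmetric matrices that is convex along all symmetric
rank-one directions `a ⊙ b` and has linear growth is globally Lipschitz on the
symmetric matrices. -/
theorem sym_rank_one_convex_linear_growth_lipschitz {d : ℕ}
    (f : Matrix (Fin d) (Fin d) ℝ → ℝ) (M : ℝ)
    (hconv : ∀ a b : Fin d → ℝ, ∀ A : Matrix (Fin d) (Fin d) ℝ, Aᵀ = A →
      ConvexOn ℝ Set.univ (fun t : ℝ => f (A + t • sprod a b)))
    (hgrowth : ∀ A : Matrix (Fin d) (Fin d) ℝ, Aᵀ = A → |f A| ≤ M * (1 + ‖A‖)) :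
    ∃ L : ℝ, 0 < L ∧ ∀ A B : Matrix (Fin d) (Fin d) ℝ, Aᵀ = A → Bᵀ = B →
      |f A - f B| ≤ L * ‖A - B‖ := by
  have hM : 0 ≤ M := by
    have h := hgrowth 0 (by simp)
    have := abs_nonneg (f 0)
    simp only [norm_zero] at h
    nlinarith
  refine ⟨M * (d * d) + 1, by positivity, ?_⟩
  intro A B hA hB
  set S : Matrix (Fin d) (Fin d) ℝ := B - A with hSdef
  have hS : Sᵀ = S := by rw [hSdef, transpose_sub, hA, hB]
  -- telescoping over finsets of index pairs
  have tel : ∀ (s : Finset (Fin d × Fin d)) (A' : Matrix (Fin d) (Fin d) ℝ), A'ᵀ = A' →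
      |f (A' + ∑ p ∈ s, S p.1 p.2 • sprod (Pi.single p.1 1) (Pi.single p.2 1)) - f A'|
        ≤ ∑ p ∈ s, M * ‖sprod (Pi.single p.1 (1:ℝ)) (Pi.single p.2 1)‖ * |S p.1 p.2| := by
    intro s
    induction s using Finset.induction with
    | empty => intro A' hA'; simp
    | @insert p s hp ih =>
      intro A' hA'
      rw [Finset.sum_insert hp, Finset.sum_insert hp]
      set c : ℝ := S p.1 p.2
      set D := sprod (Pi.single p.1 (1:ℝ)) (Pi.single p.2 1) with hDdef
      have hA'' : (A' + c • D)ᵀ = A' + c • D := by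
        rw [transpose_add, transpose_smul, hDdef, sprod_symm, hA']
      have h1 : A' + (c • D + ∑ p ∈ s, S p.1 p.2 • sprod (Pi.single p.1 1) (Pi.single p.2 1))
          = (A' + c • D) + ∑ p ∈ s, S p.1 p.2 • sprod (Pi.single p.1 1) (Pi.single p.2 1) := by
        rw [add_assoc]
      rw [h1]
      have h2 := ih (A' + c • D) hA''
      have h3 := step_lip f M hconv hgrowth hM (Pi.single p.1 1) (Pi.single p.2 1) A' hA' c
      calc |f ((A' + c • D) + ∑ p ∈ s, S p.1 p.2 • sprod (Pi.single p.1 1) (Pi.single p.2 1)) - f A'|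
          ≤ |f ((A' + c • D) + ∑ p ∈ s, S p.1 p.2 • sprod (Pi.single p.1 1) (Pi.single p.2 1))
              - f (A' + c • D)| + |f (A' + c • D) - f A'| := abs_sub_le _ _ _
        _ ≤ M * ‖D‖ * |c| + ∑ p ∈ s, M * ‖sprod (Pi.single p.1 (1:ℝ)) (Pi.single p.2 1)‖ * |S p.1 p.2| := by
            rw [mul_comm (M * ‖D‖) |c|] at h3
            rw [mul_comm (M * ‖D‖) |c|]
            linarith
  have hmain := tel Finset.univ A hA
  rw [sprod_decomp S hS] at hmain
  have hAB : A + S = B := by rw [hSdef]; abel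
  rw [hAB] at hmain
  -- bound the sum
  have hbound : ∑ p : Fin d × Fin d, M * ‖sprod (Pi.single p.1 (1:ℝ)) (Pi.single p.2 1)‖ * |S p.1 p.2|
      ≤ (M * (d * d)) * ‖S‖ := by
    have hterm : ∀ p : Fin d × Fin d,
        M * ‖sprod (Pi.single p.1 (1:ℝ)) (Pi.single p.2 1)‖ * |S p.1 p.2| ≤ M * ‖S‖ := by
      intro p
      have h1 : ‖sprod (Pi.single p.1 (1:ℝ)) (Pi.single p.2 1)‖ ≤ 1 := sprod_single_norm_le _ _
      have h2 : |S p.1 p.2| ≤ ‖S‖ := by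
        simpa [Real.norm_eq_abs] using Matrix.norm_entry_le_entrywise_sup_norm (A := S) (i := p.1) (j := p.2)
      have h3 : (0:ℝ) ≤ ‖sprod (Pi.single p.1 (1:ℝ)) (Pi.single p.2 1)‖ := norm_nonneg _
      have e1 : M * ‖sprod (Pi.single p.1 (1:ℝ)) (Pi.single p.2 1)‖ ≤ M := by nlinarith
      calc M * ‖sprod (Pi.single p.1 (1:ℝ)) (Pi.single p.2 1)‖ * |S p.1 p.2|
          ≤ M * |S p.1 p.2| := mul_le_mul_of_nonneg_right e1 (abs_nonneg _)
        _ ≤ M * ‖S‖ := mul_le_mul_of_nonneg_left h2 hM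
    calc ∑ p : Fin d × Fin d, M * ‖sprod (Pi.single p.1 (1:ℝ)) (Pi.single p.2 1)‖ * |S p.1 p.2|
        ≤ ∑ _p : Fin d × Fin d, M * ‖S‖ := Finset.sum_le_sum (fun p _ => hterm p)
      _ = (M * (d * d)) * ‖S‖ := by
          rw [Finset.sum_const, Finset.card_univ, Fintype.card_prod, Fintype.card_fin]
          ring
  have hnorm : ‖S‖ = ‖A - B‖ := by rw [hSdef, norm_sub_rev]
  rw [abs_sub_comm]
  calc |f B - f A| ≤ (M * (d * d)) * ‖S‖ := hmain.trans hbound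
    _ ≤ (M * (d * d) + 1) * ‖A - B‖ := by
        rw [hnorm]
        nlinarith [norm_nonneg (A - B)]
end

section
/- De Giorgi–Letta criterion: let X be a metric space and μ a set function on the open subsets of X with μ(∅) = 0 that is monotone, subadditive on pairs of open sets, superadditive on disjoint pairs of open sets, and inner regular (μ(A) = sup{μ(B) : B open, B̄ compact ⊂ A}). Then the extension μ(B) := inf{μ(A) : A open, A ⊃ B} to all subsets is an outer measure, and its restriction to the Borel σ-algebra is a Borel measure. -/
open MeasureTheory

/-- De Giorgi–Letta criterion: a monotone, subadditive, superadditive and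
inner regular set function on the open sets of a metric space extends, via
outer approximation by open sets, to an outer measure whose restriction to the
Borel σ-algebra is countably additive. -/
theorem de_giorgi_letta {X : Type*} [MetricSpace X] [MeasurableSpace X]
    [BorelSpace X] (μ : Set X → ENNReal)
    (h0 : μ ∅ = 0)
    (hmono : ∀ A B : Set X, IsOpen A → IsOpen B → A ⊆ B → μ A ≤ μ B)
    (hsub : ∀ A B : Set X, IsOpen A → IsOpen B → μ (A ∪ B) ≤ μ A + μ B)
    (hsuper : ∀ A B : Set X, IsOpen A → IsOpen B → Disjoint A B →
      μ A + μ B ≤ μ (A ∪ B))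
    (hinner : ∀ A : Set X, IsOpen A →
      μ A = ⨆ (B : Set X) (_ : IsOpen B) (_ : IsCompact (closure B))
        (_ : closure B ⊆ A), μ B) :
    let ν : Set X → ENNReal := fun B => ⨅ (A : Set X) (_ : IsOpen A) (_ : B ⊆ A), μ A
    ν ∅ = 0 ∧
    (∀ s t : Set X, s ⊆ t → ν s ≤ ν t) ∧
    (∀ s : ℕ → Set X, ν (⋃ i, s i) ≤ ∑' i, ν (s i)) ∧
    (∀ s : ℕ → Set X, (∀ i, MeasurableSet (s i)) → Pairwise (Function.onFun Disjoint s) →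
      ν (⋃ i, s i) = ∑' i, ν (s i)) := by
  intro ν
  -- basic facts about ν
  have hle_ν : ∀ (s A : Set X), IsOpen A → s ⊆ A → ν s ≤ μ A := by
    intro s A hA hsA
    exact iInf_le_of_le A (iInf_le_of_le hA (iInf_le _ hsA))
  have hempty : ν ∅ = 0 :=
    le_antisymm (h0 ▸ hle_ν ∅ ∅ isOpen_empty subset_rfl) zero_le
  have hνmono : ∀ s t : Set X, s ⊆ t → ν s ≤ ν t := by
    intro s t hst
    refine le_iInf fun A => le_iInf fun hA => le_iInf fun htA => ?_
    exact hle_ν s A hA (hst.trans htA)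
  -- finite subadditivity of μ on open sets
  have hfin : ∀ (F : Finset ℕ) (A : ℕ → Set X), (∀ i, IsOpen (A i)) →
      μ (⋃ i ∈ F, A i) ≤ ∑ i ∈ F, μ (A i) := by
    intro F A hA
    induction F using Finset.induction with
    | empty => simp [h0]
    | insert _ _ hx ih =>
      rename_i a F
      rw [Finset.set_biUnion_insert, Finset.sum_insert hx]
      refine (hsub _ _ (hA a) (isOpen_biUnion fun i _ => hA i)).trans ?_
      exact add_le_add le_rfl ih
  -- countable subadditivity of μ on open sets, via inner regularity
  have hcount : ∀ A : ℕ → Set X, (∀ i, IsOpen (A i)) →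
      μ (⋃ i, A i) ≤ ∑' i, μ (A i) := by
    intro A hA
    rw [hinner _ (isOpen_iUnion hA)]
    refine iSup_le fun B => iSup_le fun hB => iSup_le fun hBc => iSup_le fun hBsub => ?_
    obtain ⟨F, hF⟩ := hBc.elim_finite_subcover A hA hBsub
    calc μ B ≤ μ (⋃ i ∈ F, A i) :=
          hmono _ _ hB (isOpen_biUnion fun i _ => hA i)
            ((subset_closure).trans hF)
      _ ≤ ∑ i ∈ F, μ (A i) := hfin F A hA
      _ ≤ ∑' i, μ (A i) := ENNReal.sum_le_tsum F
  -- choosing almost optimal open supersets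
  have hex : ∀ (s : Set X) (ε : ENNReal), ε ≠ 0 →
      ∃ U : Set X, IsOpen U ∧ s ⊆ U ∧ μ U ≤ ν s + ε := by
    intro s ε hε
    rcases eq_or_ne (ν s) ⊤ with h | h
    · exact ⟨Set.univ, isOpen_univ, Set.subset_univ _, by simp [h]⟩
    · have : ν s < ν s + ε := ENNReal.lt_add_right h hε
      have := this
      rw [show ν s = ⨅ (A : Set X) (_ : IsOpen A) (_ : s ⊆ A), μ A from rfl] at this
      simp only [iInf_lt_iff] at this
      obtain ⟨U, hU, hsU, hμU⟩ := this
      exact ⟨U, hU, hsU, hμU.le⟩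
  -- countable subadditivity of ν
  have hνsub : ∀ s : ℕ → Set X, ν (⋃ i, s i) ≤ ∑' i, ν (s i) := by
    intro s
    refine ENNReal.le_of_forall_pos_le_add fun ε hε _ => ?_
    obtain ⟨ε', hε', hsum⟩ :=
      ENNReal.exists_pos_sum_of_countable (ε := (ε : ENNReal)) (by simp [hε.ne']) ℕ
    choose U hU hsU hμU using fun i => hex (s i) (ε' i) (by simp [(hε' i).ne'])
    calc ν (⋃ i, s i) ≤ μ (⋃ i, U i) :=
          hle_ν _ _ (isOpen_iUnion hU) (Set.iUnion_mono hsU)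
      _ ≤ ∑' i, μ (U i) := hcount U hU
      _ ≤ ∑' i, (ν (s i) + ε' i) := ENNReal.tsum_le_tsum hμU
      _ = (∑' i, ν (s i)) + ∑' i, (ε' i : ENNReal) := ENNReal.tsum_add
      _ ≤ (∑' i, ν (s i)) + ε := add_le_add le_rfl hsum.le
  -- package ν as an outer measure
  set m : OuterMeasure X :=
    { measureOf := ν
      empty := hempty
      mono := fun {s t} h => hνmono s t h
      iUnion_nat := fun s _ => hνsub s } with hm_def
  have hm_eq : ∀ s : Set X, m s = ν s := fun s => rfl
  -- m is a metric outer measure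
  have hmetric : m.IsMetric := by
    intro s t hst
    refine le_antisymm ?_ ?_
    · -- subadditivity, via ε-argument
      refine ENNReal.le_of_forall_pos_le_add fun ε hε _ => ?_
      have hε2 : ((ε : ENNReal) / 2) ≠ 0 := by
        simp [ENNReal.div_eq_zero_iff, hε.ne']
      obtain ⟨U, hU, hsU, hμU⟩ := hex s (ε / 2) hε2
      obtain ⟨V, hV, htV, hμV⟩ := hex t (ε / 2) hε2
      calc m (s ∪ t) ≤ μ (U ∪ V) :=
            hle_ν _ _ (hU.union hV) (Set.union_subset_union hsU htV)
        _ ≤ μ U + μ V := hsub U V hU hV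
        _ ≤ (ν s + ε / 2) + (ν t + ε / 2) := add_le_add hμU hμV
        _ = m s + m t + (ε / 2 + ε / 2) := by
            simp only [hm_eq]; ring
        _ = m s + m t + ε := by rw [ENNReal.add_halves]
    · -- superadditivity, using metric separation
      obtain ⟨r, hr, hrsep⟩ := hst
      set r' : ENNReal := min r 1 with hr'
      have hr'0 : r' ≠ 0 :=
        (lt_min (pos_iff_ne_zero.2 hr) zero_lt_one).ne'
      have hr'top : r' ≠ ⊤ := ne_top_of_le_ne_top (by simp) (min_le_right _ _)
      have hr'pos : 0 < r'.toReal := ENNReal.toReal_pos hr'0 hr'top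
      set δ : ℝ := r'.toReal / 3 with hδ
      have hδpos : 0 < δ := by positivity
      have hsep2 : ∀ x ∈ s, ∀ y ∈ t, r' ≤ edist x y := fun x hx y hy =>
        le_trans (min_le_left _ _) (hrsep x hx y hy)
      have hdisj : Disjoint (Metric.thickening δ s) (Metric.thickening δ t) := by
        rw [Set.disjoint_left]
        intro x hxs hxt
        rw [Metric.mem_thickening_iff_infEdist_lt] at hxs hxt
        obtain ⟨y, hy, hy'⟩ := EMetric.infEdist_lt_iff.1 hxs
        obtain ⟨z, hz, hz'⟩ := EMetric.infEdist_lt_iff.1 hxt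
        have h1 : edist y z ≤ edist y x + edist x z := edist_triangle _ _ _
        have h2 : edist y x + edist x z < ENNReal.ofReal δ + ENNReal.ofReal δ := by
          rw [edist_comm] at hy'
          exact ENNReal.add_lt_add hy' hz'
        have h3 : ENNReal.ofReal δ + ENNReal.ofReal δ < r' := by
          rw [← ENNReal.ofReal_add hδpos.le hδpos.le]
          calc ENNReal.ofReal (δ + δ) < ENNReal.ofReal r'.toReal := by
                apply ENNReal.ofReal_lt_ofReal_iff_of_nonneg (by positivity) |>.2
                rw [hδ]; linarith
            _ = r' := ENNReal.ofReal_toReal hr'top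
        exact absurd (hsep2 y hy z hz) (not_le.2 ((h1.trans_lt h2).trans h3))
      refine le_iInf fun A => le_iInf fun hA => le_iInf fun hsubA => ?_
      set U : Set X := A ∩ Metric.thickening δ s with hUdef
      set V : Set X := A ∩ Metric.thickening δ t with hVdef
      have hU : IsOpen U := hA.inter Metric.isOpen_thickening
      have hV : IsOpen V := hA.inter Metric.isOpen_thickening
      have hsU : s ⊆ U := Set.subset_inter (hsubA.trans' Set.subset_union_left)
        (Metric.self_subset_thickening hδpos s)
      have htV : t ⊆ V := Set.subset_inter (hsubA.trans' Set.subset_union_right)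
        (Metric.self_subset_thickening hδpos t)
      have hUV : Disjoint U V :=
        hdisj.mono Set.inter_subset_right Set.inter_subset_right
      calc m s + m t ≤ μ U + μ V :=
            add_le_add (hle_ν s U hU hsU) (hle_ν t V hV htV)
        _ ≤ μ (U ∪ V) := hsuper U V hU hV hUV
        _ ≤ μ A := hmono _ _ (hU.union hV) hA
            (Set.union_subset Set.inter_subset_left Set.inter_subset_left)
  -- conclusion
  refine ⟨hempty, hνmono, hνsub, ?_⟩
  intro s hs hd
  have hcar : ∀ i, MeasurableSet[m.caratheodory] (s i) := by
    intro i
    have : MeasurableSet[borel X] (s i) := by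
      rw [← BorelSpace.measurable_eq (α := X)]; exact hs i
    exact hmetric.borel_le_caratheodory _ this
  exact m.iUnion_eq_of_caratheodory hcar hd
end
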